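/- arXiv:1407.1366 — 4 statements merged into one kernel-verified Lean document; each statement's English description precedes it below -/
import Mathlib

section
/- In a triangulated category that admits arbitrary (small) coproducts, every idempotent endomorphism splits; that is, if e : X → X satisfies e ∘ e = e, then there exist an object Y and morphisms p : X → Y, i : Y → X with p ∘ i = id_Y and i ∘ p = e. -/
/-!
Let `σ` be the shift `ιₙ ↦ ιₙ₊₁` of `T = ∐ₙ X`. The map `g = 𝟙 - e σ` on `T` is a split
monomorphism, so in a distinguished triangle `T → T → Y → T⟦1⟧` on `g` the connecting morphism
vanishes and `T → Y` is a cokernel of `g`. A morphism out of `T` killing `g` has all its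
components equal and fixed by `e`; hence the first component `p : X → Y` of the cokernel and the
map `i : Y → X` induced by `e` on every summand satisfy `p ≫ i = e` and `i ≫ p = 𝟙`.
-/

open CategoryTheory CategoryTheory.Limits CategoryTheory.Pretriangulated

universe v u

namespace CategoryTheory

namespace Idempotents

variable {C : Type*} [Category C] [Preadditive C] [HasCountableCoproducts C] {X : C}
  (e : X ⟶ X)

noncomputable def telescopeMap : ∐ (fun _ : ℕ => X) ⟶ ∐ (fun _ : ℕ => X) :=
  Limits.Sigma.desc fun n =>
    Limits.Sigma.ι (fun _ : ℕ => X) n - e ≫ Limits.Sigma.ι (fun _ : ℕ => X) (n + 1)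

@[simp]
lemma ι_telescopeMap (n : ℕ) :
    Limits.Sigma.ι (fun _ : ℕ => X) n ≫ telescopeMap e =
      Limits.Sigma.ι (fun _ : ℕ => X) n - e ≫ Limits.Sigma.ι (fun _ : ℕ => X) (n + 1) := by
  simp [telescopeMap]

/-- On the summands `(𝟙 - e) X` the map `telescopeMap e` is the identity, on the summands `e X` it
is `𝟙 - σ` for the shift `σ`, which `ιₙ ↦ -∑_{k<n} ιₖ` retracts. -/
noncomputable def telescopeRetraction : ∐ (fun _ : ℕ => X) ⟶ ∐ (fun _ : ℕ => X) :=
  Limits.Sigma.desc fun n =>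
    Limits.Sigma.ι (fun _ : ℕ => X) n - e ≫ Limits.Sigma.ι (fun _ : ℕ => X) n -
      ∑ k ∈ Finset.range n, e ≫ Limits.Sigma.ι (fun _ : ℕ => X) k

@[simp]
lemma ι_telescopeRetraction (n : ℕ) :
    Limits.Sigma.ι (fun _ : ℕ => X) n ≫ telescopeRetraction e =
      Limits.Sigma.ι (fun _ : ℕ => X) n - e ≫ Limits.Sigma.ι (fun _ : ℕ => X) n -
        ∑ k ∈ Finset.range n, e ≫ Limits.Sigma.ι (fun _ : ℕ => X) k := by
  simp [telescopeRetraction]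

variable {e}

lemma telescopeMap_comp_telescopeRetraction (he : e ≫ e = e) :
    telescopeMap e ≫ telescopeRetraction e = 𝟙 _ := by
  have he_comp {Z : C} (f : X ⟶ Z) : e ≫ e ≫ f = e ≫ f := by rw [← Category.assoc, he]
  ext n
  rw [← Category.assoc, ι_telescopeMap]
  simp only [Preadditive.sub_comp, Category.assoc, ι_telescopeRetraction, Preadditive.comp_sub,
    Preadditive.comp_add, Preadditive.comp_sum, Finset.sum_range_succ, he_comp, Category.comp_id]
  abel

lemma isSplitMono_telescopeMap (he : e ≫ e = e) : IsSplitMono (telescopeMap e) :=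
  ⟨⟨⟨telescopeRetraction e, telescopeMap_comp_telescopeRetraction he⟩⟩⟩

lemma telescopeMap_comp_desc (he : e ≫ e = e) :
    telescopeMap e ≫ Limits.Sigma.desc (fun _ : ℕ => e) = 0 := by
  ext n
  rw [← Category.assoc, ι_telescopeMap]
  simp [he]

lemma ι_comp_eq_of_telescopeMap_comp_eq_zero (he : e ≫ e = e) {Z : C}
    {q : ∐ (fun _ : ℕ => X) ⟶ Z} (hq : telescopeMap e ≫ q = 0) (n : ℕ) :
    Limits.Sigma.ι (fun _ : ℕ => X) n ≫ q = e ≫ Limits.Sigma.ι (fun _ : ℕ => X) 0 ≫ q := by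
  have hstep (n : ℕ) : Limits.Sigma.ι (fun _ : ℕ => X) n ≫ q =
      e ≫ Limits.Sigma.ι (fun _ : ℕ => X) (n + 1) ≫ q := by
    rw [← sub_eq_zero, ← Category.assoc e, ← Preadditive.sub_comp, ← ι_telescopeMap,
      Category.assoc, hq, comp_zero]
  have hfixed (n : ℕ) : e ≫ Limits.Sigma.ι (fun _ : ℕ => X) n ≫ q =
      Limits.Sigma.ι (fun _ : ℕ => X) n ≫ q := by
    rw [hstep n, ← Category.assoc, he]
  induction n with
  | zero => exact (hfixed 0).symm
  | succ n ih => rw [← hfixed (n + 1), ← hstep n, ih]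

lemma idempotent_splits_of_hasCokernel_telescopeMap (he : e ≫ e = e)
    [HasCokernel (telescopeMap e)] :
    ∃ (Y : C) (i : Y ⟶ X) (p : X ⟶ Y), i ≫ p = 𝟙 Y ∧ p ≫ i = e := by
  refine ⟨cokernel (telescopeMap e), cokernel.desc _ _ (telescopeMap_comp_desc he),
    Limits.Sigma.ι (fun _ : ℕ => X) 0 ≫ cokernel.π _, ?_, by simp⟩
  ext n
  simpa using (ι_comp_eq_of_telescopeMap_comp_eq_zero he (cokernel.condition _) n).symm

end Idempotents

namespace Pretriangulated

variable {C : Type*} [Category C] [Preadditive C] [HasZeroObject C] [HasShift C ℤ]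
  [∀ n : ℤ, (shiftFunctor C n).Additive] [Pretriangulated C]

noncomputable def isColimitCokernelCoforkOfMono₁ (T : Triangle C) (hT : T ∈ distTriang C)
    [Mono T.mor₁] : IsColimit (CokernelCofork.ofπ T.mor₂ (comp_distTriang_mor_zero₁₂ T hT)) :=
  have := T.epi₂ hT (T.mor₃_eq_zero_of_mono₁ hT ‹_›)
  CokernelCofork.IsColimit.ofπ' _ _ fun k hk =>
    ⟨(T.yoneda_exact₂ hT k hk).choose, (T.yoneda_exact₂ hT k hk).choose_spec.symm⟩

lemma hasCokernel_of_mono {X Y : C} (f : X ⟶ Y) [Mono f] : HasCokernel f := by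
  obtain ⟨Z, g, h, hT⟩ := distinguished_cocone_triangle f
  have : Mono (Triangle.mk f g h).mor₁ := ‹Mono f›
  exact ⟨_, isColimitCokernelCoforkOfMono₁ _ hT⟩

instance isIdempotentComplete_of_hasCountableCoproducts [HasCountableCoproducts C] :
    IsIdempotentComplete C where
  idempotents_split X e he := by
    have := Idempotents.isSplitMono_telescopeMap he
    have := hasCokernel_of_mono (Idempotents.telescopeMap e)
    exact Idempotents.idempotent_splits_of_hasCokernel_telescopeMap he

end Pretriangulated

end CategoryTheory

theorem idempotent_splits_in_triangulated_with_coproducts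
    {C : Type u} [Category.{v} C] [Preadditive C] [HasZeroObject C]
    [HasShift C ℤ] [∀ n : ℤ, (shiftFunctor C n).Additive] [Pretriangulated C]
    [HasCoproducts.{v} C]
    (X : C) (e : X ⟶ X) (he : e ≫ e = e) :
    ∃ (Y : C) (p : X ⟶ Y) (i : Y ⟶ X), i ≫ p = 𝟙 Y ∧ p ≫ i = e := by
  obtain ⟨Y, i, p, hip, hpi⟩ := IsIdempotentComplete.idempotents_split X e he
  exact ⟨Y, p, i, hip, hpi⟩
end

section
/- Let T be a triangulated category with arbitrary products. Let (S_m)_{m ∈ ℤ} be a family of strictly full triangulated subcategories of T, each closed under arbitrary products in T, with ∩_m S_m = {0}. Let ⋯ → X_2 → X_1 be an inverse system in T such that X_j ∈ S_{a_j} with a_j → −∞, and assume the subcategories are nested: S_m ⊆ S_{m'} for m ≤ m'. Then the homotopy limit holim_j X_j (defined as a fiber of 1 − shift on ∏_j X_j) is a zero object. -/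
/-!
Fix `m` and choose `N` with `a j ≤ m` for `j ≥ N`. Split `∏ⱼ Xⱼ` as the biproduct of the head
`∏_{j<N} Xⱼ` and the tail `∏_{j≥N} Xⱼ`, which lies in `S m`. The head block of `1 - shift` is
`1 - t` with `t` strictly upper triangular, hence nilpotent, so `1 - t` is invertible and
Gaussian elimination turns `1 - shift` into `iso ⊞ g` with `g` an endomorphism of the tail.
The cone of `1 - shift`, which is `H⟦1⟧`, is therefore in `S m`; as `m` is arbitrary, `H = 0`.
-/

open CategoryTheory CategoryTheory.Limits CategoryTheory.Pretriangulated Opposite ZeroObject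

universe v u

variable {C : Type u} [Category.{v} C] [Preadditive C] [HasZeroObject C]
  [HasShift C ℤ] [∀ n : ℤ, (shiftFunctor C n).Additive] [Pretriangulated C]
  [HasProducts.{v} C]

/-- A strictly full triangulated subcategory, given by its set of objects. -/
structure IsTriangulatedSub (S : Set C) : Prop where
  zero_mem : (0 : C) ∈ S
  iso_closed : ∀ {X Y : C}, (X ≅ Y) → X ∈ S → Y ∈ S
  shift_mem : ∀ (X : C) (n : ℤ), X ∈ S → (X⟦n⟧ : C) ∈ S
  ext_mem : ∀ (T : Triangle C), T ∈ (distTriang C) → T.obj₁ ∈ S → T.obj₂ ∈ S → T.obj₃ ∈ S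

namespace CategoryTheory.Limits.Pi

section Nilpotent

variable {D : Type*} [Category D] [Preadditive D]

/-- The hypothesis `ht` says that `t ≫ π j` only sees the components of height `> h j`. -/
theorem isNilpotent_of_strictlyUpperTriangular {ι : Type*} {Y : ι → D} [HasProduct Y]
    (h : ι → ℕ) (N : ℕ) (hN : ∀ i, h i < N) (t : End (∏ᶜ Y))
    (ht : ∀ {W : D} (x : W ⟶ ∏ᶜ Y) (j : ι),
      (∀ i, h j < h i → x ≫ Pi.π Y i = 0) → x ≫ t ≫ Pi.π Y j = 0) :
    IsNilpotent t := by
  have vanish : ∀ k j, N ≤ h j + k → (t ^ k : End (∏ᶜ Y)) ≫ Pi.π Y j = 0 := by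
    intro k
    induction k with
    | zero => intro j hj; exact absurd (hN j) (by omega)
    | succ k ih =>
      intro j hj
      rw [pow_succ', End.mul_def, Category.assoc]
      exact ht _ j fun i hi => ih i (by omega)
  exact ⟨N, Pi.hom_ext _ _ fun j => by simpa using vanish N j (by omega)⟩

end Nilpotent

section Split

variable {D : Type*} [Category D] [HasZeroMorphisms D] [HasBinaryBiproducts D]
  {ι : Type*} (f : ι → D) (p : ι → Prop) [DecidablePred p] [HasProduct f]
  [HasProduct fun i : {i // p i} => f i] [HasProduct fun i : {i // ¬ p i} => f i]

@[simps]
noncomputable def isoBiprodSubtype :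
    ∏ᶜ f ≅ (∏ᶜ fun i : {i // p i} => f i) ⊞ (∏ᶜ fun i : {i // ¬ p i} => f i) where
  hom := biprod.lift (Pi.lift fun i => Pi.π f i.1) (Pi.lift fun i => Pi.π f i.1)
  inv := Pi.lift fun i =>
    if h : p i then biprod.fst ≫ Pi.π (fun i : {i // p i} => f i) ⟨i, h⟩
    else biprod.snd ≫ Pi.π (fun i : {i // ¬ p i} => f i) ⟨i, h⟩
  hom_inv_id := Pi.hom_ext _ _ fun i => by by_cases h : p i <;> simp [h]
  inv_hom_id := by ext ⟨i, hi⟩ <;> simp [hi]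

variable {f p}

theorem inl_isoBiprodSubtype_inv_π_of_pos {i : ι} (h : p i) :
    biprod.inl ≫ (isoBiprodSubtype f p).inv ≫ Pi.π f i =
      Pi.π (fun i : {i // p i} => f i) ⟨i, h⟩ := by
  simp [h]

theorem inl_isoBiprodSubtype_inv_π_of_neg {i : ι} (h : ¬ p i) :
    biprod.inl ≫ (isoBiprodSubtype f p).inv ≫ Pi.π f i = 0 := by
  simp [h]

end Split

end CategoryTheory.Limits.Pi

section Tower

variable {D : Type u} [Category.{v} D] [HasProducts.{v} D]
  (X : ℕ → D) (d : ∀ j, X (j + 1) ⟶ X j)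

noncomputable def towerShift :
    (∏ᶜ fun i : ULift.{v} ℕ => X i.down) ⟶ ∏ᶜ fun i : ULift.{v} ℕ => X i.down :=
  Pi.lift fun i => Pi.π _ (ULift.up (i.down + 1)) ≫ d i.down

@[simp]
theorem towerShift_π (i : ULift.{v} ℕ) :
    towerShift X d ≫ Pi.π _ i = Pi.π (fun i : ULift.{v} ℕ => X i.down) ⟨i.down + 1⟩ ≫ d i.down :=
  Pi.lift_π _ _

variable [Preadditive D] [HasBinaryBiproducts D] (N : ℕ)

noncomputable def towerShiftHead :
    End (∏ᶜ fun i : {i : ULift.{v} ℕ // i.down < N} => X i.1.down) :=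
  biprod.inl ≫ (Pi.isoBiprodSubtype (fun i : ULift.{v} ℕ => X i.down) (·.down < N)).inv ≫
    towerShift X d ≫ (Pi.isoBiprodSubtype (fun i : ULift.{v} ℕ => X i.down) (·.down < N)).hom ≫
      biprod.fst

theorem isNilpotent_towerShiftHead : IsNilpotent (towerShiftHead X d N) := by
  refine Pi.isNilpotent_of_strictlyUpperTriangular (fun i => i.1.down) N (fun i => i.2) _ ?_
  intro W x j hx
  have hπ : x ≫ towerShiftHead X d N ≫ Pi.π _ j =
      x ≫ (biprod.inl ≫ (Pi.isoBiprodSubtype (fun i : ULift.{v} ℕ => X i.down) (·.down < N)).inv ≫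
        Pi.π _ ⟨j.1.down + 1⟩) ≫ d j.1.down := by
    simp [towerShiftHead, -Pi.isoBiprodSubtype_inv]
  by_cases hj : j.1.down + 1 < N
  · rw [hπ, Pi.inl_isoBiprodSubtype_inv_π_of_pos (f := fun i : ULift.{v} ℕ => X i.down)
      (p := (·.down < N)) hj, ← Category.assoc, hx ⟨⟨j.1.down + 1⟩, hj⟩ (by simp), zero_comp]
  · rw [hπ, Pi.inl_isoBiprodSubtype_inv_π_of_neg (f := fun i : ULift.{v} ℕ => X i.down)
      (p := (·.down < N)) hj, zero_comp, comp_zero]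

end Tower

section Triangulated

variable {D : Type*} [Category D] [Preadditive D] [HasZeroObject D] [HasShift D ℤ]
  [∀ n : ℤ, (shiftFunctor D n).Additive] [Pretriangulated D]

namespace IsTriangulatedSub

variable {S : Set D} (hS : IsTriangulatedSub S)
include hS

theorem isClosedUnderIsomorphisms : ObjectProperty.IsClosedUnderIsomorphisms (· ∈ S) :=
  ⟨hS.iso_closed⟩

theorem isTriangulated : ObjectProperty.IsTriangulated (· ∈ S) :=
  have := hS.isClosedUnderIsomorphisms
  have : ObjectProperty.IsStableUnderShift (· ∈ S) ℤ :=
    ⟨fun n => ⟨fun X hX => hS.shift_mem X n hX⟩⟩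
  have : ObjectProperty.IsTriangulatedClosed₃ (· ∈ S) := .mk' hS.ext_mem
  { exists_zero := ⟨0, isZero_zero D, hS.zero_mem⟩
    toIsTriangulatedClosed₂ := .of_isTriangulatedClosed₃ }

end IsTriangulatedSub

namespace CategoryTheory.ObjectProperty

variable (P : ObjectProperty D) [P.IsTriangulated]

theorem trW_of_prop {X Y : D} (f : X ⟶ Y) (hX : P X) (hY : P Y) : P.trW f := by
  obtain ⟨Z, hZ, g, h, hT⟩ := P.distinguished_cocone_triangle f hX hY
  exact trW.mk P hT hZ

theorem trW_biprod_map {X₁ X₂ Y₁ Y₂ : D} {f₁ : X₁ ⟶ Y₁} {f₂ : X₂ ⟶ Y₂}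
    (h₁ : P.trW f₁) (h₂ : P.trW f₂) : P.trW (biprod.map f₁ f₂) := by
  have : P.trW (prod.map f₁ f₂) :=
    MorphismProperty.limMap (J := Discrete WalkingPair) _ (by rintro ⟨⟨⟩⟩ <;> assumption)
  refine (P.trW.arrow_mk_iso_iff
    (Arrow.isoMk (biprod.isoProd _ _) (biprod.isoProd _ _) ?_)).2 this
  dsimp
  ext <;> simp

theorem trW_of_isIso_inl_comp_fst {X₁ X₂ Y₁ Y₂ : D} (f : X₁ ⊞ X₂ ⟶ Y₁ ⊞ Y₂)
    [IsIso (biprod.inl ≫ f ≫ biprod.fst)] (hX₂ : P X₂) (hY₂ : P Y₂) : P.trW f := by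
  obtain ⟨L, R, g, hg⟩ := Biprod.gaussian f
  have : P.trW (L.hom ≫ f ≫ R.hom) := by
    rw [hg]
    exact P.trW_biprod_map (P.trW_of_isIso _) (P.trW_of_prop g hX₂ hY₂)
  simpa [MorphismProperty.cancel_left_of_respectsIso,
    MorphismProperty.cancel_right_of_respectsIso] using this

end CategoryTheory.ObjectProperty

end Triangulated

theorem CategoryTheory.ObjectProperty.trW_one_sub_towerShift (P : ObjectProperty C)
    [P.IsTriangulated] (X : ℕ → C) (d : ∀ j, X (j + 1) ⟶ X j) (N : ℕ)
    (hX : P (∏ᶜ fun i : {i : ULift.{v} ℕ // ¬ i.down < N} => X i.1.down)) :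
    P.trW (𝟙 _ - towerShift X d) := by
  let e := Pi.isoBiprodSubtype (fun i : ULift.{v} ℕ => X i.down) (·.down < N)
  have : IsIso (biprod.inl ≫ (e.inv ≫ (𝟙 _ - towerShift X d) ≫ e.hom) ≫ biprod.fst) := by
    have head : biprod.inl ≫ (e.inv ≫ (𝟙 _ - towerShift X d) ≫ e.hom) ≫ biprod.fst =
        (1 - towerShiftHead X d N : End _) := by
      simp [e, towerShiftHead, End.one_def, -Pi.isoBiprodSubtype_inv, -Pi.isoBiprodSubtype_hom]
    rw [head]
    exact (isUnit_iff_isIso _).1 (isNilpotent_towerShiftHead X d N).isUnit_one_sub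
  simpa [MorphismProperty.cancel_left_of_respectsIso,
    MorphismProperty.cancel_right_of_respectsIso]
    using P.trW_of_isIso_inl_comp_fst (e.inv ≫ (𝟙 _ - towerShift X d) ≫ e.hom) hX hX

theorem holim_vanishes_of_decreasing_membership
    (S : ℤ → Set C) (hS : ∀ m, IsTriangulatedSub (S m))
    (hprod : ∀ (m : ℤ) {ι : Type v} (f : ι → C), (∀ i, f i ∈ S m) → (∏ᶜ f) ∈ S m)
    (hnested : ∀ m m' : ℤ, m ≤ m' → S m ⊆ S m')
    (hinter : ∀ Z : C, (∀ m, Z ∈ S m) → IsZero Z)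
    (X : ℕ → C) (d : ∀ j : ℕ, X (j + 1) ⟶ X j)
    (a : ℕ → ℤ) (hX : ∀ j, X j ∈ S (a j))
    (ha : Filter.Tendsto a Filter.atTop Filter.atBot)
    -- the product of the tower and its shift endomorphism
    (H : C)
    (φ : H ⟶ ∏ᶜ (fun i : ULift.{v} ℕ => X i.down))
    (ψ : (∏ᶜ (fun i : ULift.{v} ℕ => X i.down)) ⟶ (H⟦(1 : ℤ)⟧ : C))
    (htriangle : Triangle.mk φ
      (𝟙 (∏ᶜ (fun i : ULift.{v} ℕ => X i.down)) -
        Pi.lift (fun i : ULift.{v} ℕ =>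
          Pi.π (fun i : ULift.{v} ℕ => X i.down) (ULift.up (i.down + 1)) ≫ d i.down)) ψ
      ∈ (distTriang C)) :
    IsZero H := by
  refine hinter H fun m => ?_
  have := (hS m).isTriangulated
  have := (hS m).isClosedUnderIsomorphisms
  obtain ⟨N, hN⟩ : ∃ N : ℕ, ∀ j, N ≤ j → a j ≤ m :=
    Filter.eventually_atTop.1 (ha.eventually (Filter.eventually_le_atBot m))
  have tail : (∏ᶜ fun i : {i : ULift.{v} ℕ // ¬ i.down < N} => X i.1.down) ∈ S m :=
    hprod m _ fun i => hnested _ _ (hN _ (not_lt.1 i.2)) (hX _)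
  exact (ObjectProperty.trW_iff_of_distinguished' (· ∈ S m) _ htriangle).1
    (ObjectProperty.trW_one_sub_towerShift _ X d N tail)
end

section
/- Let p ≥ 5 be a prime and let G be the group with generators f_1, f_2, f_3, f_4, f_5 and relations: f_i^p = 1 for all i; f_5 is central; [f_2, f_1] = f_3; [f_3, f_1] = f_4; [f_4, f_1] = [f_3, f_2] = f_5; [f_4, f_2] = [f_4, f_3] = 1, where [g,h] = g⁻¹h⁻¹gh. Then G is a group of order p^5. -/
/-!
The generators form a polycyclic sequence: each `fᵢ` has order dividing `p` and conjugation
by `fᵢ` maps `⟨fᵢ₊₁, …, f₅⟩` into itself, so `|G| ≤ p⁵`. Conversely, all relations hold in the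
semidirect product of the group `Heis 𝔽ₚ` of order `p⁴` (coordinates of `f₂^b f₃^c f₄^d f₅^e`)
by `𝔽ₚ`, acting through conjugation by powers of `f₁`; these images generate it, so this group
of order `p⁵` is a quotient of `G`. The action involves the binomial coefficients `C(k, 2)` and
`C(k, 3)`, which is where `p ≥ 5` enters.
-/

/-- The commutator word `[g,h] = g⁻¹h⁻¹gh`. -/
def cmt (g h : FreeGroup (Fin 5)) : FreeGroup (Fin 5) := g⁻¹ * h⁻¹ * g * h

/-- The relations of the presentation. -/
def paperRels (p : ℕ) : Set (FreeGroup (Fin 5)) :=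
  (Set.range fun i : Fin 5 => FreeGroup.of i ^ p) ∪
  -- f₅ is central
  (Set.range fun i : Fin 5 => cmt (FreeGroup.of 4) (FreeGroup.of i)) ∪
  { cmt (FreeGroup.of 1) (FreeGroup.of 0) * (FreeGroup.of 2)⁻¹,  -- [f₂,f₁] = f₃
    cmt (FreeGroup.of 2) (FreeGroup.of 0) * (FreeGroup.of 3)⁻¹,  -- [f₃,f₁] = f₄
    cmt (FreeGroup.of 3) (FreeGroup.of 0) * (FreeGroup.of 4)⁻¹,  -- [f₄,f₁] = f₅
    cmt (FreeGroup.of 2) (FreeGroup.of 1) * (FreeGroup.of 4)⁻¹,  -- [f₃,f₂] = f₅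
    cmt (FreeGroup.of 3) (FreeGroup.of 1),                        -- [f₄,f₂] = 1
    cmt (FreeGroup.of 3) (FreeGroup.of 2) }                       -- [f₄,f₃] = 1

section Polycyclic

open Subgroup
open scoped Pointwise

variable {G : Type*} [Group G]

theorem Subgroup.mem_normalizer_of_conj_mem {H : Subgroup G} [Finite H] {g : G}
    (hg : ∀ h ∈ H, g⁻¹ * h * g ∈ H) : g ∈ normalizer (H : Set G) := by
  have hmap : H.map (MulAut.conj g⁻¹).toMonoidHom = H :=
    eq_of_le_of_card_ge (map_le_iff_le_comap.mpr fun h hh => by simpa using hg h hh)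
      (card_map_of_injective (MulAut.conj g⁻¹).injective).ge
  simpa using inv_mem (mem_normalizer_iff_map_conj_eq.mpr hmap)

theorem Subgroup.finite_card_zpowers_sup_le {H : Subgroup G} [Finite H] {g : G} {n : ℕ}
    (hn : 0 < n) (hgn : g ^ n = 1) (hg : ∀ h ∈ H, g⁻¹ * h * g ∈ H) :
    Finite ↥(zpowers g ⊔ H) ∧ Nat.card ↥(zpowers g ⊔ H) ≤ n * Nat.card H := by
  have hcoe := coe_mul_of_left_le_normalizer_right _ _
    (zpowers_le.mpr (mem_normalizer_of_conj_mem hg))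
  have hfin : IsOfFinOrder g := isOfFinOrder_iff_pow_eq_one.mpr ⟨n, hn, hgn⟩
  refine ⟨?_, ?_⟩
  · rw [← SetLike.coe_sort_coe, hcoe]
    exact (hfin.finite_zpowers.mul (Set.toFinite _)).to_subtype
  · calc Nat.card ↥(zpowers g ⊔ H) = Nat.card ↥((zpowers g : Set G) * (H : Set G)) := by
          rw [← SetLike.coe_sort_coe, hcoe]
      _ ≤ Nat.card (zpowers g) * Nat.card H := Set.natCard_mul_le
      _ ≤ n * Nat.card H := by
          gcongr
          rw [Nat.card_zpowers]
          exact orderOf_le_of_pow_eq_one hn hgn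

def IsPolycyclicSeq (n : ℕ) : List G → Prop
  | [] => True
  | g :: l => g ^ n = 1 ∧ (∀ h ∈ l, g⁻¹ * h * g ∈ closure {x | x ∈ l}) ∧ IsPolycyclicSeq n l

theorem IsPolycyclicSeq.finite_card_closure_le {n : ℕ} (hn : 0 < n) :
    ∀ {l : List G}, IsPolycyclicSeq n l →
      Finite (closure {x | x ∈ l}) ∧ Nat.card (closure {x | x ∈ l}) ≤ n ^ l.length
  | [], _ => by
    simp only [List.not_mem_nil, Set.ofPred_false, Subgroup.closure_empty]
    exact ⟨inferInstance, by simp⟩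
  | g :: l, ⟨hgn, hg, hl⟩ => by
    obtain ⟨hfin, hcard⟩ := finite_card_closure_le hn hl
    have hsup : closure {x | x ∈ g :: l} = zpowers g ⊔ closure {x | x ∈ l} := by
      rw [zpowers_eq_closure, ← Subgroup.closure_union]
      congr 1
      ext; simp
    have hle : closure {x | x ∈ l} ≤ (closure {x | x ∈ l}).comap (MulAut.conj g⁻¹).toMonoidHom :=
      (closure_le _).mpr fun h hh => by simpa using hg h hh
    have hnorm : ∀ h ∈ closure {x | x ∈ l}, g⁻¹ * h * g ∈ closure {x | x ∈ l} :=
      fun h hh => by simpa using hle hh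
    rw [hsup, List.length_cons, pow_succ']
    obtain ⟨hfin', hcard'⟩ := finite_card_zpowers_sup_le hn hgn hnorm
    exact ⟨hfin', hcard'.trans (Nat.mul_le_mul_left n hcard)⟩

end Polycyclic

section Relations

variable {G : Type*} [Group G]

theorem inv_mul_inv_mul_mul_mul_inv_eq_one_iff {g h k : G} :
    g⁻¹ * h⁻¹ * g * h * k⁻¹ = 1 ↔ h⁻¹ * g * h = g * k := by
  rw [mul_inv_eq_one, show g⁻¹ * h⁻¹ * g * h = g⁻¹ * (h⁻¹ * g * h) by group,
    inv_mul_eq_iff_eq_mul]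

theorem inv_mul_inv_mul_mul_eq_one_iff {g h : G} :
    g⁻¹ * h⁻¹ * g * h = 1 ↔ h⁻¹ * g * h = g := by
  rw [show g⁻¹ * h⁻¹ * g * h = g⁻¹ * (h⁻¹ * g * h) by group, inv_mul_eq_one, eq_comm]

/-- The relations of `paperRels`, with each commutator relation `[x, y] = z` written as
`y⁻¹ x y = x z`. -/
structure PaperRelations (p : ℕ) (f : Fin 5 → G) : Prop where
  pow_eq_one : ∀ i, f i ^ p = 1
  conj_four : ∀ i, (f i)⁻¹ * f 4 * f i = f 4
  conj_one_zero : (f 0)⁻¹ * f 1 * f 0 = f 1 * f 2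
  conj_two_zero : (f 0)⁻¹ * f 2 * f 0 = f 2 * f 3
  conj_three_zero : (f 0)⁻¹ * f 3 * f 0 = f 3 * f 4
  conj_two_one : (f 1)⁻¹ * f 2 * f 1 = f 2 * f 4
  conj_three_one : (f 1)⁻¹ * f 3 * f 1 = f 3
  conj_three_two : (f 2)⁻¹ * f 3 * f 2 = f 3

variable {p : ℕ} {f : Fin 5 → G}

theorem lift_eq_one_of_mem_paperRels_iff :
    (∀ r ∈ paperRels p, FreeGroup.lift f r = 1) ↔ PaperRelations p f := by
  simp only [paperRels, Set.mem_union, Set.mem_range, Set.mem_insert_iff, Set.mem_singleton_iff,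
    or_imp, forall_and, forall_exists_index, forall_eq, forall_apply_eq_imp_iff, cmt, map_mul,
    map_inv, map_pow, FreeGroup.lift_apply_of, inv_mul_inv_mul_mul_mul_inv_eq_one_iff,
    inv_mul_inv_mul_mul_eq_one_iff]
  constructor
  · rintro ⟨⟨hpow, hcen⟩, h10, h20, h30, h21, h31, h32⟩
    exact ⟨hpow, hcen, h10, h20, h30, h21, h31, h32⟩
  · rintro ⟨hpow, hcen, h10, h20, h30, h21, h31, h32⟩
    exact ⟨⟨hpow, hcen⟩, h10, h20, h30, h21, h31, h32⟩

theorem PaperRelations.isPolycyclicSeq (h : PaperRelations p f) :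
    IsPolycyclicSeq p [f 0, f 1, f 2, f 3, f 4] := by
  simp only [IsPolycyclicSeq, List.mem_cons, List.not_mem_nil, or_false, forall_eq_or_imp,
    forall_eq, h.pow_eq_one, h.conj_four, h.conj_one_zero, h.conj_two_zero, h.conj_three_zero,
    h.conj_two_one, h.conj_three_one, h.conj_three_two]
  refine ⟨trivial, ⟨?_, ?_, ?_, ?_⟩, trivial, ⟨?_, ?_, ?_⟩, trivial, ⟨?_, ?_⟩, trivial, ?_,
    trivial, by simp, trivial⟩ <;>
  first
    | (apply mul_mem <;> apply Subgroup.subset_closure <;> simp)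
    | (apply Subgroup.subset_closure; simp)

theorem PaperRelations.finite_card_closure_le (hp : 0 < p) (h : PaperRelations p f) :
    Finite (Subgroup.closure (Set.range f)) ∧
      Nat.card (Subgroup.closure (Set.range f)) ≤ p ^ 5 := by
  have hrange : Set.range f = {x | x ∈ [f 0, f 1, f 2, f 3, f 4]} := by
    ext x; simp [Fin.exists_fin_succ, eq_comm]
  rw [hrange]
  exact h.isPolycyclicSeq.finite_card_closure_le hp

end Relations

lemma two_ne_zero_of_neZero_six {K : Type*} [Field K] [NeZero (6 : K)] : (2 : K) ≠ 0 := fun h =>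
  NeZero.ne (6 : K) (by rw [show (6 : K) = 2 * 3 by norm_num, h, zero_mul])

/-- Coordinates `(b, c, d, e)` stand for `f₂^b f₃^c f₄^d f₅^e`: the Heisenberg group in
`(b, c, e)` times the line `d`. -/
@[ext]
structure Heis (K : Type*) where
  b : K
  c : K
  d : K
  e : K

namespace Heis

variable {K : Type*}

def equivProd : Heis K ≃ K × K × K × K where
  toFun x := (x.b, x.c, x.d, x.e)
  invFun y := ⟨y.1, y.2.1, y.2.2.1, y.2.2.2⟩

lemma card : Nat.card (Heis K) = Nat.card K ^ 4 := by
  simp [Nat.card_congr equivProd, Nat.card_prod, pow_succ, mul_assoc]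

section CommRing

variable [CommRing K]

instance : Mul (Heis K) :=
  ⟨fun x y => ⟨x.b + y.b, x.c + y.c, x.d + y.d, x.e + y.e + x.c * y.b⟩⟩
instance : One (Heis K) := ⟨⟨0, 0, 0, 0⟩⟩
instance : Inv (Heis K) := ⟨fun x => ⟨-x.b, -x.c, -x.d, x.c * x.b - x.e⟩⟩

@[simp] lemma mul_b (x y : Heis K) : (x * y).b = x.b + y.b := rfl
@[simp] lemma mul_c (x y : Heis K) : (x * y).c = x.c + y.c := rfl
@[simp] lemma mul_d (x y : Heis K) : (x * y).d = x.d + y.d := rfl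
@[simp] lemma mul_e (x y : Heis K) : (x * y).e = x.e + y.e + x.c * y.b := rfl
@[simp] lemma one_b : (1 : Heis K).b = 0 := rfl
@[simp] lemma one_c : (1 : Heis K).c = 0 := rfl
@[simp] lemma one_d : (1 : Heis K).d = 0 := rfl
@[simp] lemma one_e : (1 : Heis K).e = 0 := rfl
@[simp] lemma inv_b (x : Heis K) : x⁻¹.b = -x.b := rfl
@[simp] lemma inv_c (x : Heis K) : x⁻¹.c = -x.c := rfl
@[simp] lemma inv_d (x : Heis K) : x⁻¹.d = -x.d := rfl
@[simp] lemma inv_e (x : Heis K) : x⁻¹.e = x.c * x.b - x.e := rfl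

instance : Group (Heis K) where
  mul_assoc x y z := by ext <;> simp <;> ring
  one_mul x := by ext <;> simp
  mul_one x := by ext <;> simp
  inv_mul_cancel x := by ext <;> simp

theorem pow_eq_of_c_mul_b_eq_zero {x : Heis K} (hx : x.c * x.b = 0) (n : ℕ) :
    x ^ n = ⟨n * x.b, n * x.c, n * x.d, n * x.e⟩ := by
  induction n with
  | zero => ext <;> simp
  | succ n ih => ext <;> simp [pow_succ, ih, mul_assoc, hx] <;> ring

end CommRing

section Field

variable [Field K]

def choose₂ (k : K) : K := k * (k - 1) / 2

def choose₃ (k : K) : K := k * (k - 1) * (k - 2) / 6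

/-- Conjugation by `f₁^k`, i.e. `x ↦ f₁^{-k} x f₁^k`, in coordinates. -/
def shear (k : K) (x : Heis K) : Heis K :=
  ⟨x.b, x.c + k * x.b, x.d + k * x.c + choose₂ k * x.b,
    x.e + k * x.d + choose₂ k * x.c + choose₃ k * x.b + k * choose₂ x.b⟩

instance : SMul (Multiplicative K) (Heis K) := ⟨fun s x => shear s.toAdd x⟩

lemma smul_eq_shear (s : Multiplicative K) (x : Heis K) : s • x = shear s.toAdd x := rfl

variable [NeZero (6 : K)]

lemma choose₂_add (x y : K) : choose₂ (x + y) = choose₂ x + choose₂ y + x * y := by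
  have := two_ne_zero_of_neZero_six (K := K)
  unfold choose₂; field_simp; ring

lemma choose₃_add (x y : K) :
    choose₃ (x + y) = choose₃ x + choose₃ y + x * choose₂ y + choose₂ x * y := by
  have := two_ne_zero_of_neZero_six (K := K)
  have := NeZero.ne (6 : K)
  unfold choose₃ choose₂; field_simp; ring

lemma shear_mul (k : K) (x y : Heis K) : shear k (x * y) = shear k x * shear k y := by
  ext <;> simp only [shear, mul_b, mul_c, mul_d, mul_e, choose₂_add] <;> ring

lemma shear_shear (k l : K) (x : Heis K) : shear k (shear l x) = shear (k + l) x := by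
  ext <;> simp only [shear, choose₂_add, choose₃_add] <;> ring

instance : MulDistribMulAction (Multiplicative K) (Heis K) where
  one_smul x := by ext <;> simp [smul_eq_shear, shear, choose₂, choose₃]
  mul_smul s t x := (shear_shear _ _ x).symm
  smul_one s := by ext <;> simp [smul_eq_shear, shear, choose₂]
  smul_mul s := shear_mul s.toAdd

end Field

end Heis

open SemidirectProduct Multiplicative

abbrev ModelGroup (K : Type*) [Field K] [NeZero (6 : K)] :=
  Heis K ⋊[MulDistribMulAction.toMulAut (Multiplicative K) (Heis K)] Multiplicative K

namespace ModelGroup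

section Field

variable {K : Type*} [Field K] [NeZero (6 : K)]

/-- `f₁` goes to `ofAdd (-1)` because `inr s * inl x * (inr s)⁻¹ = inl (s • x)`, whereas the
relations conjugate as `f₁⁻¹ x f₁`. -/
def gen : Fin 5 → ModelGroup K :=
  ![inr (ofAdd (-1)), inl ⟨1, 0, 0, 0⟩, inl ⟨0, 1, 0, 0⟩, inl ⟨0, 0, 1, 0⟩, inl ⟨0, 0, 0, 1⟩]

lemma inr_conj_inl (x : Heis K) :
    (inr (ofAdd (-1)))⁻¹ * inl x * inr (ofAdd (-1)) = (inl (Heis.shear 1 x) : ModelGroup K) := by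
  rw [← map_inv, ← ofAdd_neg, neg_neg, ← inv_inv (ofAdd (-1 : K)), ← ofAdd_neg, neg_neg,
    ← inl_aut]
  rfl

theorem paperRelations_gen (p : ℕ) [CharP K p] : PaperRelations p (gen (K := K)) := by
  constructor
  · intro i
    fin_cases i
    · simp [gen, ← map_pow, ← ofAdd_nsmul]
    all_goals
      simp only [gen, Fin.mk_one, Fin.reduceFinMk, Matrix.cons_val, ← map_pow]
      rw [Heis.pow_eq_of_c_mul_b_eq_zero (by simp), CharP.cast_eq_zero, ← map_one inl]
      congr 1
      ext <;> simp
  all_goals try intro i; fin_cases i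
  all_goals
    simp only [gen, Fin.zero_eta, Fin.mk_one, Fin.reduceFinMk, Matrix.cons_val, inr_conj_inl]
    simp only [← map_inv, ← map_mul, inl_inj]
    ext <;> simp [Heis.shear, Heis.choose₂, Heis.choose₃]

end Field

section ZMod

variable {p : ℕ} [Fact p.Prime] [NeZero (6 : ZMod p)]

lemma card : Nat.card (ModelGroup (ZMod p)) = p ^ 5 := by
  simp [Heis.card, pow_succ]

lemma inl_eq_gen_pow (x : Heis (ZMod p)) :
    (inl x : ModelGroup (ZMod p)) =
      gen 1 ^ x.b.val * gen 2 ^ x.c.val * gen 3 ^ x.d.val * gen 4 ^ x.e.val := by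
  simp only [gen, Fin.isValue, Matrix.cons_val, ← map_pow, ← map_mul]
  congr 1
  ext <;> simp [Heis.pow_eq_of_c_mul_b_eq_zero]

lemma inr_eq_gen_pow (s : Multiplicative (ZMod p)) :
    (inr s : ModelGroup (ZMod p)) = gen 0 ^ (-s.toAdd).val := by
  simp [gen, ← map_pow, ← ofAdd_nsmul]

lemma closure_range_gen : Subgroup.closure (Set.range (gen (K := ZMod p))) = ⊤ := by
  have hpow (i : Fin 5) (n : ℕ) :
      (gen i : ModelGroup (ZMod p)) ^ n ∈ Subgroup.closure (Set.range gen) :=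
    pow_mem (Subgroup.subset_closure (Set.mem_range_self i)) n
  refine eq_top_iff.mpr fun x _ => ?_
  rw [← inl_left_mul_inr_right x, inl_eq_gen_pow, inr_eq_gen_pow]
  exact mul_mem (mul_mem (mul_mem (mul_mem (hpow 1 _) (hpow 2 _)) (hpow 3 _)) (hpow 4 _)) (hpow 0 _)

end ZMod

end ModelGroup

lemma ZMod.neZero_six_of_five_le {p : ℕ} (hp : p.Prime) (hp5 : 5 ≤ p) :
    NeZero (6 : ZMod p) := by
  refine ⟨fun h => ?_⟩
  have h6 : p ∣ 2 * 3 := (ZMod.natCast_eq_zero_iff _ _).mp (by exact_mod_cast h)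
  rcases hp.dvd_mul.mp h6 with h | h <;> have := Nat.le_of_dvd (by norm_num) h <;> omega

theorem presented_group_has_order_p_pow_five
    (p : ℕ) (hp : p.Prime) (hp5 : 5 ≤ p) :
    Nat.card (PresentedGroup (paperRels p)) = p ^ 5 := by
  have : Fact p.Prime := ⟨hp⟩
  have : NeZero (6 : ZMod p) := ZMod.neZero_six_of_five_le hp hp5
  have hrels : PaperRelations p (PresentedGroup.of (rels := paperRels p)) := by
    refine lift_eq_one_of_mem_paperRels_iff.mp fun r hr => ?_
    rw [← FreeGroup.lift_unique (f := PresentedGroup.of) (PresentedGroup.mk _) fun _ => rfl]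
    exact PresentedGroup.one_of_mem hr
  obtain ⟨hfin, hle⟩ := hrels.finite_card_closure_le hp.pos
  rw [PresentedGroup.closure_range_of] at hfin hle
  have : Finite (PresentedGroup (paperRels p)) := Finite.of_equiv _ Subgroup.topEquiv.toEquiv
  let toModel := PresentedGroup.toGroup
    (lift_eq_one_of_mem_paperRels_iff.mpr (ModelGroup.paperRelations_gen (K := ZMod p) p))
  have hsurj : Function.Surjective toModel := by
    rw [← MonoidHom.range_eq_top, eq_top_iff, ← ModelGroup.closure_range_gen,
      Subgroup.closure_le]
    rintro _ ⟨i, rfl⟩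
    exact ⟨_, PresentedGroup.toGroup.of _⟩
  refine le_antisymm (by rwa [Subgroup.card_top] at hle) ?_
  exact ModelGroup.card (p := p) ▸ Nat.card_le_card_of_surjective _ hsurj
end

section
/- Let T be a triangulated category with arbitrary coproducts, and let S be the smallest localizing subcategory of T containing a given set P of compact objects of T. Suppose the inclusion S → T has a right adjoint C : T → S with counit ε : C(X) → X. Then for every object X of T, every object P ∈ P, and every integer a, the induced map Hom_T(P[a], C(X)) → Hom_T(P[a], X) is a bijection; moreover an object Y of S with Hom(P[a], Y) = 0 for all P ∈ P and a ∈ ℤ is zero, so C(X) is determined up to isomorphism by these properties. -/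
open CategoryTheory CategoryTheory.Limits CategoryTheory.Pretriangulated Opposite ZeroObject

universe v u

variable {C : Type u} [Category.{v} C] [Preadditive C] [HasZeroObject C]
  [HasShift C ℤ] [∀ n : ℤ, (shiftFunctor C n).Additive] [Pretriangulated C]
  [HasCoproducts.{v} C]

/-- A localizing subcategory: a strictly full triangulated subcategory closed under
arbitrary (small) coproducts. -/
structure IsLocalizingSub (S : Set C) extends IsTriangulatedSub S : Prop where
  coproduct_mem : ∀ {ι : Type v} (f : ι → C), (∀ i, f i ∈ S) → (∐ f) ∈ S

/-- An object `X` is compact if `Hom(X, -)` commutes with arbitrary coproducts. -/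
def IsCompactObj (X : C) : Prop :=
  ∀ ι : Type v, Nonempty (PreservesColimitsOfShape (Discrete ι)
    (preadditiveCoyoneda.obj (op X)))

/-!
For fixed `Y`, the objects `Z` with `Hom(Z⟦a⟧, Y) = 0` for all `a` form a localizing
subcategory; if it contains `P` it contains `S`, so for `Y ∈ S` it gives `𝟙 Y = 0`. Thus the
`Q⟦a⟧` detect zero objects of `S`, and, through the long exact `Hom(Q⟦a⟧, -)`-sequence of a
cone, isomorphisms between objects of `S`. Since `Q⟦a⟧ ∈ S`, the adjunction makes the counit
bijective on maps out of `Q⟦a⟧`; a map `g : Z ⟶ X` as in the uniqueness statement factors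
through the counit by a map that is then bijective on these maps too, hence an isomorphism.
-/

lemma CategoryTheory.Adjunction.bijective_comp_counit_app {D E : Type*} [Category D]
    [Category E] {F : D ⥤ E} {G : E ⥤ D} (adj : F ⊣ G) [F.Full] [F.Faithful] (Y : D) (X : E) :
    Function.Bijective (fun f : F.obj Y ⟶ F.obj (G.obj X) => f ≫ adj.counit.app X) := by
  have h : (fun f : F.obj Y ⟶ F.obj (G.obj X) => f ≫ adj.counit.app X) =
      (adj.homEquiv Y X).symm ∘ (Functor.FullyFaithful.ofFullyFaithful F).homEquiv.symm := by
    funext f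
    simp [Adjunction.homEquiv_counit]
  rw [h]
  exact (adj.homEquiv Y X).symm.bijective.comp (Equiv.bijective _)

section

variable {D : Type*} [Category D] [HasShift D ℤ]

lemma injective_comp_shift_map {K A B : D} (g : A ⟶ B) {a b : ℤ} (n : ℤ) (h : a + n = b)
    (hg : Function.Injective (fun f : (K⟦a⟧ : D) ⟶ A => f ≫ g)) :
    Function.Injective (fun f : (K⟦b⟧ : D) ⟶ A⟦n⟧ => f ≫ g⟦n⟧') := by
  intro f₁ f₂ hf
  let e : (K⟦b⟧ : D) ≅ K⟦a⟧⟦n⟧ := (shiftFunctorAdd' D a n b h).app K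
  have unshift : ∀ f : (K⟦b⟧ : D) ⟶ A⟦n⟧,
      f = e.hom ≫ ((shiftFunctor D n).preimage (e.inv ≫ f))⟦n⟧' := by
    simp
  have hpre : (shiftFunctor D n).preimage (e.inv ≫ f₁) =
      (shiftFunctor D n).preimage (e.inv ≫ f₂) := by
    refine hg ((shiftFunctor D n).map_injective ?_)
    simp only [Functor.map_comp, Functor.map_preimage, Category.assoc]
    exact congrArg (e.inv ≫ ·) hf
  rw [unshift f₁, unshift f₂, hpre]

variable [Preadditive D] [HasZeroObject D] [∀ n : ℤ, (shiftFunctor D n).Additive]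
  [Pretriangulated D]

lemma Pretriangulated.hom_to_obj₃_eq_zero {T : Triangle D} (hT : T ∈ distTriang D) {K : D}
    (hsurj : Function.Surjective (fun f : K ⟶ T.obj₁ => f ≫ T.mor₁))
    (hinj : Function.Injective (fun f : K ⟶ T.obj₁⟦(1 : ℤ)⟧ => f ≫ T.mor₁⟦(1 : ℤ)⟧'))
    (f : K ⟶ T.obj₃) : f = 0 := by
  have hf₃ : f ≫ T.mor₃ = 0 := hinj (by
    simp only [Category.assoc, comp_distTriang_mor_zero₃₁ _ hT, Limits.comp_zero,
      Limits.zero_comp])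
  obtain ⟨u, rfl⟩ := Triangle.coyoneda_exact₃ _ hT f hf₃
  obtain ⟨v, rfl⟩ := hsurj u
  simp only [Category.assoc, comp_distTriang_mor_zero₁₂ _ hT, Limits.comp_zero]

end

def shiftLeftOrthogonal (Y : C) : Set C := {Z | ∀ a : ℤ, ∀ f : (Z⟦a⟧ : C) ⟶ Y, f = 0}

lemma isLocalizingSub_shiftLeftOrthogonal (Y : C) :
    IsLocalizingSub (shiftLeftOrthogonal Y) := by
  have of_iso : ∀ {A B : C}, (A ≅ B) → (∀ f : A ⟶ Y, f = 0) → ∀ f : B ⟶ Y, f = 0 :=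
    fun e h f => by simpa using e.inv ≫= h (e.hom ≫ f)
  refine ⟨⟨?_, ?_, ?_, ?_⟩, ?_⟩
  · exact fun a f => ((shiftFunctor C a).map_isZero (isZero_zero C)).eq_of_src f 0
  · exact fun e hA a => of_iso ((shiftFunctor C a).mapIso e) (hA a)
  · exact fun A n hA a => of_iso ((shiftFunctorAdd C n a).app A) (hA (n + a))
  · intro T hT h₁ h₂ a f
    obtain ⟨g, rfl⟩ := Triangle.yoneda_exact₃ _ (Triangle.shift_distinguished T hT a) f (h₂ a _)
    have hg : g = 0 := of_iso ((shiftFunctorAdd' C a 1 (a + 1) rfl).app T.obj₁) (h₁ (a + 1)) g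
    rw [hg, Limits.comp_zero]
    rfl
  · intro ι f hf a g
    -- `sigmaComparison` is an isomorphism: the shift, an equivalence, preserves coproducts
    rw [← cancel_epi (sigmaComparison (shiftFunctor C a) f), Limits.comp_zero]
    exact colimit.hom_ext fun j => by simpa using hf j.as a _

lemma isZero_of_forall_shift_hom_eq_zero {P S : Set C}
    (hmin : ∀ (S' : Set C), IsLocalizingSub S' → P ⊆ S' → S ⊆ S') {Y : C} (hY : Y ∈ S)
    (hvan : ∀ Q ∈ P, ∀ a : ℤ, ∀ f : (Q⟦a⟧ : C) ⟶ Y, f = 0) : IsZero Y := by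
  have h := hmin _ (isLocalizingSub_shiftLeftOrthogonal Y) hvan hY 0
    ((shiftFunctorZero C ℤ).hom.app Y)
  rw [IsZero.iff_id_eq_zero]
  simpa using (shiftFunctorZero C ℤ).inv.app Y ≫= h

lemma isIso_of_bijective_comp_of_mem {P S : Set C} (hS : IsLocalizingSub S)
    (hmin : ∀ (S' : Set C), IsLocalizingSub S' → P ⊆ S' → S ⊆ S') {A B : C} (hA : A ∈ S)
    (hB : B ∈ S) (g : A ⟶ B)
    (hg : ∀ Q ∈ P, ∀ a : ℤ, Function.Bijective (fun f : (Q⟦a⟧ : C) ⟶ A => f ≫ g)) :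
    IsIso g := by
  obtain ⟨W, v, w, hT⟩ := distinguished_cocone_triangle g
  refine (Triangle.isZero₃_iff_isIso₁ _ hT).1
    (isZero_of_forall_shift_hom_eq_zero hmin (hS.ext_mem _ hT hA hB) fun Q hQ a f => ?_)
  exact Pretriangulated.hom_to_obj₃_eq_zero hT (hg Q hQ a).2
    (injective_comp_shift_map g 1 (sub_add_cancel a 1) (hg Q hQ (a - 1)).1) f

theorem colocalization_counit_bijective_and_uniqueness_general
    (P : Set C)
    (S : Set C) (hS : IsLocalizingSub S) (hPS : P ⊆ S)
    (hmin : ∀ (S' : Set C), IsLocalizingSub S' → P ⊆ S' → S ⊆ S')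
    (Cfun : C ⥤ ObjectProperty.FullSubcategory (· ∈ S))
    (adj : ObjectProperty.ι (· ∈ S) ⊣ Cfun) :
    -- the counit induces bijections on maps from the `P[a]`
    (∀ (X : C), ∀ Q ∈ P, ∀ a : ℤ,
      Function.Bijective (fun f : (Q⟦a⟧ : C) ⟶ (Cfun.obj X).obj =>
        f ≫ adj.counit.app X)) ∧
    -- an object of `S` with no nonzero maps from the `P[a]` is zero
    (∀ Y : C, Y ∈ S → (∀ Q ∈ P, ∀ a : ℤ, ∀ f : (Q⟦a⟧ : C) ⟶ Y, f = 0) → IsZero Y) ∧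
    -- hence `C(X)` is determined up to isomorphism by these properties
    (∀ (X Z : C), Z ∈ S → ∀ g : Z ⟶ X,
      (∀ Q ∈ P, ∀ a : ℤ, Function.Bijective (fun f : (Q⟦a⟧ : C) ⟶ Z => f ≫ g)) →
      Nonempty (Z ≅ (Cfun.obj X).obj)) := by
  have counit_bijective : ∀ (X : C), ∀ Q ∈ P, ∀ a : ℤ,
      Function.Bijective (fun f : (Q⟦a⟧ : C) ⟶ (Cfun.obj X).obj => f ≫ adj.counit.app X) :=
    fun X Q hQ a => adj.bijective_comp_counit_app ⟨Q⟦a⟧, hS.shift_mem Q a (hPS hQ)⟩ X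
  refine ⟨counit_bijective, fun Y hY => isZero_of_forall_shift_hom_eq_zero hmin hY,
    fun X Z hZ g hg => ?_⟩
  let g' : Z ⟶ (Cfun.obj X).obj := (adj.homEquiv ⟨Z, hZ⟩ X g).hom
  have hg' : g' ≫ adj.counit.app X = g := by
    have h := (adj.homEquiv ⟨Z, hZ⟩ X).symm_apply_apply g
    rwa [Adjunction.homEquiv_counit] at h
  have : IsIso g' := isIso_of_bijective_comp_of_mem hS hmin hZ (Cfun.obj X).2 g' fun Q hQ a =>
    (Function.Bijective.of_comp_iff' (counit_bijective X Q hQ a) _).1 (by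
      simpa only [Function.comp_def, Category.assoc, hg'] using hg Q hQ a)
  exact ⟨asIso g'⟩

theorem colocalization_counit_bijective_and_uniqueness
    (P : Set C) (hP : ∀ X ∈ P, IsCompactObj X)
    (S : Set C) (hS : IsLocalizingSub S) (hPS : P ⊆ S)
    (hmin : ∀ (S' : Set C), IsLocalizingSub S' → P ⊆ S' → S ⊆ S')
    (Cfun : C ⥤ ObjectProperty.FullSubcategory (· ∈ S))
    (adj : ObjectProperty.ι (· ∈ S) ⊣ Cfun) :
    -- the counit induces bijections on maps from the `P[a]`
    (∀ (X : C), ∀ Q ∈ P, ∀ a : ℤ,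
      Function.Bijective (fun f : (Q⟦a⟧ : C) ⟶ (Cfun.obj X).obj =>
        f ≫ adj.counit.app X)) ∧
    -- an object of `S` with no nonzero maps from the `P[a]` is zero
    (∀ Y : C, Y ∈ S → (∀ Q ∈ P, ∀ a : ℤ, ∀ f : (Q⟦a⟧ : C) ⟶ Y, f = 0) → IsZero Y) ∧
    -- hence `C(X)` is determined up to isomorphism by these properties
    (∀ (X Z : C), Z ∈ S → ∀ g : Z ⟶ X,
      (∀ Q ∈ P, ∀ a : ℤ, Function.Bijective (fun f : (Q⟦a⟧ : C) ⟶ Z => f ≫ g)) →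
      Nonempty (Z ≅ (Cfun.obj X).obj)) :=
  colocalization_counit_bijective_and_uniqueness_general P S hS hPS hmin Cfun adj
end
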